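/- For every bounded linear operator T on a complex Hilbert space, w(T)² ≤ min over α ∈ [0,1] of ‖α|T|² + (1−α)|T*|²‖. -/

import Mathlib

variable {H : Type*} [NormedAddCommGroup H] [InnerProductSpace ℂ H] [CompleteSpace H]

/-- The numerical radius of a bounded linear operator. -/
noncomputable def numRad (T : H →L[ℂ] H) : ℝ :=
  sSup {r : ℝ | ∃ x : H, ‖x‖ = 1 ∧ r = ‖(inner ℂ (T x) x : ℂ)‖}

/-- The α-norm of a bounded linear operator. -/
noncomputable def alphaNorm (α : ℝ) (T : H →L[ℂ] H) : ℝ :=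
  sSup {r : ℝ | ∃ x : H, ‖x‖ = 1 ∧
    r = Real.sqrt (α * ‖(inner ℂ (T x) x : ℂ)‖^2 + (1 - α) * ‖T x‖^2)}

/-- `|T| = (T* T)^(1/2)`. -/
noncomputable def absOp (T : H →L[ℂ] H) : H →L[ℂ] H :=
  CFC.sqrt (ContinuousLinearMap.adjoint T * T)

/-- `|T*| = (T T*)^(1/2)`. -/
noncomputable def absAdj (T : H →L[ℂ] H) : H →L[ℂ] H :=
  CFC.sqrt (T * ContinuousLinearMap.adjoint T)

/-- The real part `(A + A*)/2`. -/
noncomputable def reOp (A : H →L[ℂ] H) : H →L[ℂ] H :=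
  (2:ℝ)⁻¹ • (A + ContinuousLinearMap.adjoint A)

/-- The imaginary part `(A - A*)/(2i)`. -/
noncomputable def imOp (A : H →L[ℂ] H) : H →L[ℂ] H :=
  ((2 * Complex.I)⁻¹ : ℂ) • (A - ContinuousLinearMap.adjoint A)

/-!
For a unit vector `x`, Cauchy–Schwarz gives `|⟨Tx, x⟩| ≤ ‖Tx‖` and `|⟨Tx, x⟩| = |⟨x, T*x⟩| ≤ ‖T*x‖`,
so `|⟨Tx, x⟩|² ≤ α‖Tx‖² + (1 - α)‖T*x‖² = ⟨(α|T|² + (1 - α)|T*|²)x, x⟩ ≤ ‖α|T|² + (1 - α)|T*|²‖`.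
Taking the supremum over `x` bounds `w(T)²` by each of these norms.
-/

section NumericalRadius

variable {E : Type*} [NormedAddCommGroup E] [InnerProductSpace ℂ E]

theorem numRad_nonneg (T : E →L[ℂ] E) : 0 ≤ numRad T :=
  Real.sSup_nonneg <| by rintro _ ⟨x, -, rfl⟩; exact norm_nonneg _

theorem numRad_le {T : E →L[ℂ] E} {c : ℝ} (hc : 0 ≤ c)
    (h : ∀ x : E, ‖x‖ = 1 → ‖(inner ℂ (T x) x : ℂ)‖ ≤ c) : numRad T ≤ c :=
  Real.sSup_le (by rintro _ ⟨x, hx, rfl⟩; exact h x hx) hc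

end NumericalRadius

namespace ContinuousLinearMap

open RCLike

variable {𝕜 E : Type*} [RCLike 𝕜] [NormedAddCommGroup E] [InnerProductSpace 𝕜 E] [CompleteSpace E]

local notation "⟪" x ", " y "⟫" => inner 𝕜 x y

theorem re_inner_convexComb_adjoint_mul_self_apply [NormedSpace ℝ E] [IsScalarTower ℝ 𝕜 E]
    (T : E →L[𝕜] E) (α : ℝ) (x : E) :
    re ⟪(α • (adjoint T * T) + (1 - α) • (T * adjoint T)) x, x⟫ =
      α * ‖T x‖ ^ 2 + (1 - α) * ‖adjoint T x‖ ^ 2 := by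
  have hT : ‖T x‖ ^ 2 = re ⟪(adjoint T * T) x, x⟫ := T.apply_norm_sq_eq_inner_adjoint_left x
  have hT' : ‖adjoint T x‖ ^ 2 = re ⟪(T * adjoint T) x, x⟫ := by
    simpa using (adjoint T).apply_norm_sq_eq_inner_adjoint_left x
  simp only [hT, hT', add_apply, smul_apply, inner_add_left, map_add, real_smul_eq_coe_smul (K := 𝕜),
    inner_smul_left, conj_ofReal, re_ofReal_mul]

theorem sq_norm_inner_apply_self_le (T : E →L[𝕜] E) {α : ℝ} (hα₀ : 0 ≤ α) (hα₁ : α ≤ 1) (x : E) :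
    ‖⟪T x, x⟫‖ ^ 2 ≤ (α * ‖T x‖ ^ 2 + (1 - α) * ‖adjoint T x‖ ^ 2) * ‖x‖ ^ 2 := by
  have hT : ‖⟪T x, x⟫‖ ≤ ‖T x‖ * ‖x‖ := norm_inner_le_norm _ _
  have hT' : ‖⟪T x, x⟫‖ ≤ ‖adjoint T x‖ * ‖x‖ := by
    rw [← adjoint_inner_right, norm_inner_symm]
    exact norm_inner_le_norm _ _
  have := pow_le_pow_left₀ (norm_nonneg _) hT 2
  have := pow_le_pow_left₀ (norm_nonneg _) hT' 2
  nlinarith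

theorem sq_norm_inner_apply_self_le_norm_convexComb [NormedSpace ℝ E] [IsScalarTower ℝ 𝕜 E]
    (T : E →L[𝕜] E) {α : ℝ} (hα₀ : 0 ≤ α) (hα₁ : α ≤ 1) (x : E) :
    ‖⟪T x, x⟫‖ ^ 2 ≤ ‖α • (adjoint T * T) + (1 - α) • (T * adjoint T)‖ * ‖x‖ ^ 4 := by
  set A := α • (adjoint T * T) + (1 - α) • (T * adjoint T)
  calc ‖⟪T x, x⟫‖ ^ 2 ≤ re ⟪A x, x⟫ * ‖x‖ ^ 2 := by
        rw [re_inner_convexComb_adjoint_mul_self_apply]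
        exact sq_norm_inner_apply_self_le T hα₀ hα₁ x
    _ ≤ ‖A x‖ * ‖x‖ * ‖x‖ ^ 2 := by gcongr; exact re_inner_le_norm _ _
    _ ≤ ‖A‖ * ‖x‖ * ‖x‖ * ‖x‖ ^ 2 := by gcongr; exact A.le_opNorm x
    _ = ‖A‖ * ‖x‖ ^ 4 := by ring

end ContinuousLinearMap

open ContinuousLinearMap

theorem absOp_sq (T : H →L[ℂ] H) : absOp T ^ 2 = adjoint T * T :=
  CFC.sq_sqrt _ (star_mul_self_nonneg T)

theorem absAdj_sq (T : H →L[ℂ] H) : absAdj T ^ 2 = T * adjoint T :=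
  CFC.sq_sqrt _ (mul_star_self_nonneg T)

theorem numRad_sq_le_inf (T : H →L[ℂ] H) :
    (numRad T)^2 ≤
      sInf {r : ℝ | ∃ α ∈ Set.Icc (0:ℝ) 1,
        r = ‖α • (absOp T ^ 2) + (1 - α) • (absAdj T ^ 2)‖} := by
  refine le_csInf ⟨_, 0, Set.left_mem_Icc.2 zero_le_one, rfl⟩ ?_
  rintro _ ⟨α, ⟨hα₀, hα₁⟩, rfl⟩
  rw [absOp_sq, absAdj_sq]
  have hA := norm_nonneg (α • (adjoint T * T) + (1 - α) • (T * adjoint T))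
  refine (Real.le_sqrt (numRad_nonneg T) hA).1 (numRad_le (Real.sqrt_nonneg _) fun x hx => ?_)
  refine Real.le_sqrt_of_sq_le ?_
  simpa [hx] using sq_norm_inner_apply_self_le_norm_convexComb T hα₀ hα₁ x
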